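/- arXiv:math/0512129 — 7 statements merged into one kernel-verified Lean document; each statement's English description precedes it below -/
import Mathlib

section
/- For all integers $m \ge 0$ and all rational numbers $a$, $\sum_{k=0}^{m} \binom{m-k+a}{m-k}\binom{2k}{k}\frac{1}{4^{k}} = \binom{m+a+\tfrac{1}{2}}{m}$, where $\binom{x}{j}$ denotes the generalized binomial coefficient $x(x-1)\cdots(x-j+1)/j!$. -/
/-- The generalized binomial coefficient `x(x-1)⋯(x-k+1)/k!` for `x : ℚ`. -/
noncomputable def gbinom (x : ℚ) (k : ℕ) : ℚ :=
  (∏ j ∈ Finset.range k, (x - j)) / k.factorial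

lemma gbinom_zero (x : ℚ) : gbinom x 0 = 1 := by simp [gbinom]

lemma gbinom_succ_mul (x : ℚ) (k : ℕ) :
    ((k : ℚ) + 1) * gbinom x (k + 1) = (x - k) * gbinom x k := by
  have hk : (k.factorial : ℚ) ≠ 0 := Nat.cast_ne_zero.mpr k.factorial_ne_zero
  have hk1 : ((k : ℚ) + 1) ≠ 0 := by positivity
  unfold gbinom
  rw [Finset.prod_range_succ, Nat.factorial_succ]
  push_cast
  field_simp

lemma prod_flip (x : ℚ) (k : ℕ) :
    ∏ j ∈ Finset.range k, (x - j) = (-1) ^ k * ∏ j ∈ Finset.range k, ((k : ℚ) - 1 - x - j) := by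
  induction k with
  | zero => simp
  | succ n ih =>
      rw [Finset.prod_range_succ, Finset.prod_range_succ']
      have h1 : ∀ j : ℕ, ((n : ℚ) + 1) - 1 - x - ((j : ℚ) + 1) = (n : ℚ) - 1 - x - j := by
        intro j; ring
      push_cast
      simp only [h1]
      rw [ih]
      ring

lemma gbinom_flip (x : ℚ) (k : ℕ) :
    gbinom x k = (-1) ^ k * gbinom ((k : ℚ) - 1 - x) k := by
  unfold gbinom
  rw [prod_flip x k, mul_div_assoc]

lemma central (k : ℕ) :
    gbinom ((k : ℚ) - 1/2) k = (Nat.choose (2 * k) k : ℚ) / 4 ^ k := by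
  induction k with
  | zero => simp [gbinom]
  | succ n ih =>
      have key : (∏ j ∈ Finset.range (n + 1), (((n : ℚ) + 1) - 1/2 - j)) =
          (∏ j ∈ Finset.range n, ((n : ℚ) - 1/2 - j)) * ((n : ℚ) + 1/2) := by
        rw [Finset.prod_range_succ']
        push_cast
        congr 1
        · apply Finset.prod_congr rfl; intro j _; ring
        · ring
      have hnat0 := Nat.succ_mul_centralBinom_succ n
      simp only [Nat.centralBinom] at hnat0
      have hnat : ((n : ℚ) + 1) * (Nat.choose (2 * (n + 1)) (n + 1) : ℚ)
          = 2 * (2 * (n : ℚ) + 1) * (Nat.choose (2 * n) n : ℚ) := by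
        exact_mod_cast congrArg (Nat.cast : ℕ → ℚ) hnat0
      have hf : (((n + 1).factorial : ℚ)) = ((n : ℚ) + 1) * (n.factorial : ℚ) := by
        rw [Nat.factorial_succ]; push_cast; ring
      have hfn : (n.factorial : ℚ) ≠ 0 := Nat.cast_ne_zero.mpr n.factorial_ne_zero
      have hn1 : ((n : ℚ) + 1) ≠ 0 := by positivity
      have hstep : gbinom (((n : ℚ) + 1) - 1/2) (n+1)
          = ((n : ℚ) + 1/2) / ((n : ℚ) + 1) * gbinom ((n : ℚ) - 1/2) n := by
        unfold gbinom
        rw [key, hf]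
        field_simp
      push_cast
      rw [hstep, ih]
      field_simp
      linear_combination ((-2:ℚ)*4^n) * hnat

lemma vandermonde (x y : ℚ) (m : ℕ) :
    ∑ k ∈ Finset.range (m + 1), gbinom x k * gbinom y (m - k) = gbinom (x + y) m := by
  induction m with
  | zero => simp [gbinom_zero]
  | succ m ih =>
    have hm1 : ((m : ℚ) + 1) ≠ 0 := by positivity
    apply mul_left_cancel₀ hm1
    rw [gbinom_succ_mul (x + y) m, Finset.mul_sum]
    have split : ∀ k ∈ Finset.range (m + 2),
        ((m : ℚ) + 1) * (gbinom x k * gbinom y (m + 1 - k))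
        = (k : ℚ) * gbinom x k * gbinom y (m + 1 - k)
          + ((m + 1 - k : ℕ) : ℚ) * gbinom y (m + 1 - k) * gbinom x k := by
      intro k hk
      have hk' : k ≤ m + 1 := Nat.lt_succ_iff.mp (Finset.mem_range.mp hk)
      have e : ((m + 1 - k : ℕ) : ℚ) = (m : ℚ) + 1 - k := by
        rw [Nat.cast_sub hk']; push_cast; ring
      rw [e]; ring
    rw [Finset.sum_congr rfl split, Finset.sum_add_distrib]
    have hA : ∑ k ∈ Finset.range (m + 2), (k : ℚ) * gbinom x k * gbinom y (m + 1 - k)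
        = ∑ k ∈ Finset.range (m + 1), (x - k) * gbinom x k * gbinom y (m - k) := by
      rw [Finset.sum_range_succ']
      simp only [Nat.cast_zero, zero_mul, add_zero]
      apply Finset.sum_congr rfl
      intro j _
      have e : m + 1 - (j + 1) = m - j := by omega
      rw [e]
      have h2 := gbinom_succ_mul x j
      push_cast
      linear_combination gbinom y (m - j) * h2
    have hB : ∑ k ∈ Finset.range (m + 2), ((m + 1 - k : ℕ) : ℚ) * gbinom y (m + 1 - k) * gbinom x k
        = ∑ k ∈ Finset.range (m + 1), (y - ((m - k : ℕ) : ℚ)) * gbinom y (m - k) * gbinom x k := by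
      rw [Finset.sum_range_succ]
      simp only [Nat.sub_self, Nat.cast_zero, zero_mul, add_zero]
      apply Finset.sum_congr rfl
      intro k hk
      have hk' : k ≤ m := Nat.lt_succ_iff.mp (Finset.mem_range.mp hk)
      have e : m + 1 - k = (m - k) + 1 := by omega
      rw [e]
      have h2 := gbinom_succ_mul y (m - k)
      push_cast
      linear_combination gbinom x k * h2
    rw [hA, hB, ← Finset.sum_add_distrib]
    have comb : ∀ k ∈ Finset.range (m + 1),
        (x - k) * gbinom x k * gbinom y (m - k)
          + (y - ((m - k : ℕ) : ℚ)) * gbinom y (m - k) * gbinom x k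
        = (x + y - m) * (gbinom x k * gbinom y (m - k)) := by
      intro k hk
      have hk' : k ≤ m := Nat.lt_succ_iff.mp (Finset.mem_range.mp hk)
      have e : ((m - k : ℕ) : ℚ) = (m : ℚ) - k := by
        rw [Nat.cast_sub hk']
      rw [e]; ring
    rw [Finset.sum_congr rfl comb, ← Finset.mul_sum, ih]

/-- `∑_{k=0}^m (m-k+a choose m-k) (2k choose k) / 4^k = (m + a + 1/2 choose m)`. -/
theorem stmt_2 (m : ℕ) (a : ℚ) :
    ∑ k ∈ Finset.range (m + 1),
        gbinom (((m - k : ℕ) : ℚ) + a) (m - k) * ((Nat.choose (2 * k) k : ℚ) * (1 / 4 ^ k))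
      = gbinom ((m : ℚ) + a + 1 / 2) m := by
  have h1 : ∀ k ∈ Finset.range (m + 1),
      gbinom (((m - k : ℕ) : ℚ) + a) (m - k) * ((Nat.choose (2 * k) k : ℚ) * (1 / 4 ^ k))
      = (-1 : ℚ) ^ m * (gbinom (-(1/2) : ℚ) k * gbinom (-1 - a) (m - k)) := by
    intro k hk
    have hk' : k ≤ m := Nat.lt_succ_iff.mp (Finset.mem_range.mp hk)
    have e1 : gbinom (((m - k : ℕ) : ℚ) + a) (m - k)
        = (-1 : ℚ) ^ (m - k) * gbinom (-1 - a) (m - k) := by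
      rw [gbinom_flip (((m - k : ℕ) : ℚ) + a) (m - k)]
      congr 1
      ring
    have e2 : (Nat.choose (2 * k) k : ℚ) * (1 / 4 ^ k) = (-1 : ℚ) ^ k * gbinom (-(1/2) : ℚ) k := by
      have hc := central k
      rw [gbinom_flip ((k : ℚ) - 1/2) k] at hc
      have earg : (k : ℚ) - 1 - ((k : ℚ) - 1/2) = -(1/2) := by ring
      rw [earg] at hc
      rw [mul_one_div]
      exact hc.symm
    rw [e1, e2]
    have epow : (-1 : ℚ) ^ (m - k) * (-1 : ℚ) ^ k = (-1 : ℚ) ^ m := by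
      rw [← pow_add, Nat.sub_add_cancel hk']
    linear_combination gbinom (-(1/2) : ℚ) k * gbinom (-1 - a) (m - k) * epow
  rw [Finset.sum_congr rfl h1, ← Finset.mul_sum, vandermonde (-(1/2) : ℚ) (-1 - a) m]
  rw [gbinom_flip ((m : ℚ) + a + 1/2) m]
  have earg : (m : ℚ) - 1 - ((m : ℚ) + a + 1/2) = -(1/2) + (-1 - a) := by ring
  rw [earg]
end

section
/- For every rational (or real) number $x$, every integer $n \ge 0$ and every rational number $a$, the Vandermonde-type identity $\sum_{k=0}^{n} \binom{x-n+k}{k} \binom{n-k+a}{n-k} = \binom{x+a+1}{n}$ holds, where $\binom{y}{j}$ denotes the generalized binomial coefficient. -/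
open Finset Polynomial

theorem gbinom_eq_choose (x : ℚ) (k : ℕ) : gbinom x k = Ring.choose x k := by
  rw [Ring.choose_eq_smul, ← aeval_eq_smeval, aeval_def, eval₂_eq_eval_map, descPochhammer_map,
    descPochhammer_eval_eq_prod_range, gbinom, smul_eq_mul, div_eq_inv_mul]

namespace Ring

variable {R : Type*} [CommRing R] [BinomialRing R]

theorem choose_eq_neg_one_pow_mul_choose (y : R) (k : ℕ) :
    choose y k = (-1) ^ k * choose (k - y - 1) k := by
  rw [← neg_neg y, choose_neg, Units.smul_def, Int.coe_negOnePow_natCast, zsmul_eq_mul]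
  push_cast
  ring_nf

theorem sum_range_choose_sub_add_mul_choose (x a : R) (n : ℕ) :
    ∑ k ∈ range (n + 1), choose (x - n + k) k * choose ((n - k : ℕ) + a) (n - k)
      = choose (x + a + 1) n := by
  have hterm : ∀ k ∈ range (n + 1), choose (x - n + k) k * choose ((n - k : ℕ) + a) (n - k)
      = (-1) ^ n * (choose (n - x - 1) k * choose (-a - 1) (n - k)) := by
    intro k hk
    obtain ⟨m, rfl⟩ := Nat.exists_eq_add_of_le (Nat.lt_succ_iff.mp (mem_range.mp hk))
    rw [Nat.add_sub_cancel_left, choose_eq_neg_one_pow_mul_choose (x - ↑(k + m) + k),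
      choose_eq_neg_one_pow_mul_choose (↑m + a), pow_add]
    push_cast
    ring_nf
  rw [sum_congr rfl hterm, ← mul_sum, ← Nat.sum_antidiagonal_eq_sum_range_succ
    (fun i j => choose (n - x - 1 : R) i * choose (-a - 1) j), ← add_choose_eq _ (Commute.all _ _),
    choose_eq_neg_one_pow_mul_choose (x + a + 1)]
  congr 2
  ring

end Ring

/-- Vandermonde-type identity:
`∑_{k=0}^n (x-n+k choose k)(n-k+a choose n-k) = (x+a+1 choose n)`. -/
theorem stmt_3 (x a : ℚ) (n : ℕ) :
    ∑ k ∈ Finset.range (n + 1),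
        gbinom (x - n + k) k * gbinom (((n - k : ℕ) : ℚ) + a) (n - k)
      = gbinom (x + a + 1) n := by
  simp only [gbinom_eq_choose]
  exact Ring.sum_range_choose_sub_add_mul_choose x a n
end

section
/- In the universal enveloping algebra $U(\mathfrak{sl}_2)$, for all integers $k > m \ge 0$ one has $(\mathrm{ad}\, e)^k(f^m) \in U(\mathfrak{sl}_2)\, e$. -/
open UniversalEnvelopingAlgebra

attribute [local instance 100] LieRing.ofAssociativeRing

/-- In `U(sl₂)`, for `k > m ≥ 0` one has `(ad e)^k (f^m) ∈ U(sl₂)e`. -/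
theorem stmt_5 {𝕜 L : Type*} [Field 𝕜] [CharZero 𝕜] [LieRing L] [LieAlgebra 𝕜 L]
    (e f h : L) (he : ⁅h, e⁆ = 2 • e) (hf : ⁅h, f⁆ = (-2 : ℤ) • f) (hef : ⁅e, f⁆ = h)
    (k m : ℕ) (hkm : m < k) :
    (fun y => ι 𝕜 e * y - y * ι 𝕜 e)^[k] ((ι 𝕜 f) ^ m) ∈ Ideal.span {ι 𝕜 e} := by
  set E : UniversalEnvelopingAlgebra 𝕜 L := ι 𝕜 e with hE
  set F : UniversalEnvelopingAlgebra 𝕜 L := ι 𝕜 f with hF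
  set H : UniversalEnvelopingAlgebra 𝕜 L := ι 𝕜 h with hH
  set D : UniversalEnvelopingAlgebra 𝕜 L → UniversalEnvelopingAlgebra 𝕜 L :=
    fun y => E * y - y * E with hDdef
  set I : Ideal (UniversalEnvelopingAlgebra 𝕜 L) := Ideal.span {E} with hI
  have Dadd : ∀ a b, D (a + b) = D a + D b := by
    intro a b; simp only [hDdef]; noncomm_ring
  have Dneg : ∀ a, D (-a) = -(D a) := by
    intro a; simp only [hDdef]; noncomm_ring
  have prod : ∀ a b, D (a * b) = D a * b + a * D b := by
    intro a b; simp only [hDdef]; noncomm_ring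
  have DE : D E = 0 := by simp [hDdef]
  have DF : D F = H := by
    simp only [hDdef, hE, hF, hH]
    rw [← Ring.lie_def, ← LieHom.map_lie, hef]
  have DH : D H = -(E + E) := by
    have h1 : ⁅e, h⁆ = -(e + e) := by rw [← lie_skew, he, two_smul]
    simp only [hDdef, hE, hH]
    rw [← Ring.lie_def, ← LieHom.map_lie, h1, map_neg, map_add]
  have memE : ∀ x, x * E ∈ I := by
    intro x
    exact Ideal.mem_span_singleton'.2 ⟨x, rfl⟩
  have stab : ∀ t ∈ I, D t ∈ I := by
    intro t ht
    obtain ⟨c, hc⟩ := Ideal.mem_span_singleton'.1 ht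
    rw [← hc]
    have : D (c * E) = D c * E := by rw [prod, DE, mul_zero, add_zero]
    rw [this]; exact memE _
  have iterAdd : ∀ n : ℕ, ∀ a b, D^[n] (a + b) = D^[n] a + D^[n] b := by
    intro n
    induction n with
    | zero => intro a b; simp
    | succ n ih =>
      intro a b
      rw [Function.iterate_succ_apply, Function.iterate_succ_apply,
        Function.iterate_succ_apply, Dadd, ih]
  have iterNeg : ∀ n : ℕ, ∀ a, D^[n] (-a) = -(D^[n] a) := by
    intro n
    induction n with
    | zero => intro a; simp
    | succ n ih =>
      intro a
      rw [Function.iterate_succ_apply, Function.iterate_succ_apply, Dneg, ih]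
  have mulEiter : ∀ n : ℕ, ∀ x, D^[n] (x * E) = D^[n] x * E := by
    intro n
    induction n with
    | zero => intro x; simp
    | succ n ih =>
      intro x
      have hx : D (x * E) = D x * E := by rw [prod, DE, mul_zero, add_zero]
      rw [Function.iterate_succ_apply, Function.iterate_succ_apply, hx, ih]
  have eMem : ∀ n : ℕ, ∀ x, D^[n+1] x ∈ I → D^[n] (E * x) ∈ I := by
    intro n x hx
    have hx' : E * x = x * E + D x := by simp only [hDdef]; noncomm_ring
    rw [hx', iterAdd, mulEiter]
    refine add_mem (memE _) ?_
    rw [← Function.iterate_succ_apply]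
    exact hx
  have hHmul : ∀ x, D (H * x) = -(E * x) + (-(E * x) + H * D x) := by
    intro x
    rw [prod, DH]; noncomm_ring
  have helperH : ∀ n : ℕ, ∀ x, D^[n+1] x ∈ I → D^[n+1] (H * x) ∈ I := by
    intro n
    induction n with
    | zero =>
      intro x hx
      rw [Function.iterate_one] at hx ⊢
      rw [hHmul]
      have hEx : E * x ∈ I := by
        have := eMem 0 x (by simpa using hx)
        simpa using this
      exact add_mem (neg_mem hEx) (add_mem (neg_mem hEx) (Ideal.mul_mem_left _ _ hx))
    | succ n ih =>
      intro x hx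
      rw [Function.iterate_succ_apply, hHmul, iterAdd, iterAdd, iterNeg]
      have h1 : D^[n+1] (E * x) ∈ I := eMem (n+1) x hx
      have h2 : D^[n+1] (H * D x) ∈ I := by
        refine ih (D x) ?_
        rw [← Function.iterate_succ_apply]
        exact hx
      exact add_mem (neg_mem h1) (add_mem (neg_mem h1) h2)
  have hFmul : ∀ x, D (F * x) = H * x + F * D x := by
    intro x; rw [prod, DF]
  have helperF : ∀ n : ℕ, ∀ x, D^[n+1] x ∈ I → D^[n+2] (F * x) ∈ I := by
    intro n
    induction n with
    | zero =>
      intro x hx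
      rw [Function.iterate_succ_apply, hFmul, iterAdd]
      refine add_mem (helperH 0 x hx) ?_
      rw [Function.iterate_one, hFmul]
      refine add_mem (Ideal.mul_mem_left _ _ ?_) (Ideal.mul_mem_left _ _ ?_)
      · simpa using hx
      · exact stab _ (by simpa using hx)
    | succ n ih =>
      intro x hx
      rw [Function.iterate_succ_apply, hFmul, iterAdd]
      refine add_mem (helperH (n+1) x hx) ?_
      refine ih (D x) ?_
      rw [← Function.iterate_succ_apply]
      exact hx
  have main : ∀ m' k' : ℕ, m' < k' → D^[k'] (F ^ m') ∈ I := by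
    intro m'
    induction m' with
    | zero =>
      intro k' hk'
      obtain ⟨j, rfl⟩ : ∃ j, k' = j + 1 := ⟨k' - 1, by omega⟩
      rw [pow_zero, Function.iterate_succ_apply]
      have h1 : D (1 : UniversalEnvelopingAlgebra 𝕜 L) = 0 := by simp [hDdef]
      have h0 : D (0 : UniversalEnvelopingAlgebra 𝕜 L) = 0 := by simp [hDdef]
      rw [h1, Function.iterate_fixed h0]
      exact zero_mem _
    | succ m' ih =>
      intro k' hk'
      obtain ⟨j, rfl⟩ : ∃ j, k' = (m' + j) + 2 := ⟨k' - m' - 2, by omega⟩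
      rw [pow_succ']
      exact helperF _ (F ^ m') (ih _ (by omega))
  exact main m k hkm
end

section
/- In the universal enveloping algebra $U(\mathfrak{sl}_2)$, for all integers $0 \le k \le m$, $(\mathrm{ad}\, e)^k(f^m) \in m(m-1)\cdots(m-k+1)\, f^{m-k}\,(h-m+k)(h-m+k-1)\cdots(h-m+1) + U(\mathfrak{sl}_2)\, e$. -/
open UniversalEnvelopingAlgebra Polynomial

section aux
variable {R : Type*} [Ring R]

private lemma aux_Fpow (E F H : R) (hEF : E*F - F*E = H) (hHF : H*F - F*H = -(2*F)) (n : ℕ) :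
    E * F^(n+1) - F^(n+1)*E = ((n+1 : ℕ) : R) * F^n * (H - (n : ℕ)) := by
  induction n with
  | zero => simpa using hEF
  | succ n ih =>
    have hcF : (n:R) * F = F * (n:R) := (Nat.cast_commute n F).eq
    have hswap : (n:R) * (F^n * F) = F^n * (F * (n:R)) := by
      rw [(Nat.cast_commute n (F^n * F)).eq, mul_assoc]
    have hC : F^(n+1) * (n:R) = (n:R) * F^(n+1) := (Nat.cast_commute n (F^(n+1))).eq.symm
    have hmid : F^n * ((n:R) * F) = (n:R) * F^(n+1) := by
      rw [← mul_assoc, ← (Nat.cast_commute n (F^n)).eq, mul_assoc, pow_succ]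
    push_cast at ih ⊢
    linear_combination (norm := noncomm_ring) ih * F + F^(n+1) * hEF
      + ((n:R)+1) * F^n * hHF - 2 * hswap + (n:R) * hC - ((n:R)+1) * hmid

private lemma aux_poly {𝕜 : Type*} [CommSemiring 𝕜] [Algebra 𝕜 R]
    (E x : R) (hx : E * x = (x - 2) * E) (q : 𝕜[X]) :
    E * aeval x q = aeval (x - 2) q * E := by
  induction q using Polynomial.induction_on with
  | C a => simp [Algebra.commutes]
  | add p q hp hq => simp only [map_add, mul_add, add_mul, hp, hq]
  | monomial n a ih =>
      have e1 : (C a * X^(n+1) : 𝕜[X]) = (C a * X^n) * X := by ring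
      have e2 : aeval x ((C a * X^n) * X) = aeval x (C a * X^n) * x := by
        rw [map_mul, aeval_X]
      have e3 : aeval (x-2) ((C a * X^n) * X) = aeval (x-2) (C a * X^n) * (x-2) := by
        rw [map_mul, aeval_X]
      rw [e1, e2, e3, ← mul_assoc, ih, mul_assoc, hx, ← mul_assoc]

end aux

/-- In `U(sl₂)`, for `0 ≤ k ≤ m`,
`(ad e)^k (f^m) ∈ m(m-1)⋯(m-k+1) f^{m-k} (h-m+k)(h-m+k-1)⋯(h-m+1) + U(sl₂)e`. -/
theorem stmt_6 {𝕜 L : Type*} [Field 𝕜] [CharZero 𝕜] [LieRing L] [LieAlgebra 𝕜 L]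
    (e f h : L) (he : ⁅h, e⁆ = 2 • e) (hf : ⁅h, f⁆ = (-2 : ℤ) • f) (hef : ⁅e, f⁆ = h)
    (k m : ℕ) (hkm : k ≤ m) :
    (fun y => ι 𝕜 e * y - y * ι 𝕜 e)^[k] ((ι 𝕜 f) ^ m)
        - (m.descFactorial k : UniversalEnvelopingAlgebra 𝕜 L) * (ι 𝕜 f) ^ (m - k) *
          aeval (ι 𝕜 h - (m : UniversalEnvelopingAlgebra 𝕜 L) + (k : UniversalEnvelopingAlgebra 𝕜 L))
            (descPochhammer 𝕜 k)
      ∈ Ideal.span {ι 𝕜 e} := by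
  set R := UniversalEnvelopingAlgebra 𝕜 L
  set E : R := ι 𝕜 e with hEdef
  set F : R := ι 𝕜 f with hFdef
  set H : R := ι 𝕜 h with hHdef
  -- basic relations in U(sl2)
  have hHE : H * E - E * H = 2 * E := by
    letI : LieRing R := LieRing.ofAssociativeRing
    have h1 := LieHom.map_lie (ι 𝕜) h e
    rw [he, Ring.lie_def] at h1
    rw [← h1, ← Nat.cast_smul_eq_nsmul 𝕜, map_smul, Algebra.smul_def,
      Nat.cast_ofNat, map_ofNat]
  have hHF : H * F - F * H = -(2 * F) := by
    letI : LieRing R := LieRing.ofAssociativeRing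
    have h1 := LieHom.map_lie (ι 𝕜) h f
    rw [hf, Ring.lie_def] at h1
    rw [← h1, ← Int.cast_smul_eq_zsmul 𝕜, map_smul, Algebra.smul_def]
    simp only [Int.cast_neg, Int.cast_ofNat, map_neg, map_ofNat, neg_mul]
    rfl
  have hEF : E * F - F * E = H := by
    letI : LieRing R := LieRing.ofAssociativeRing
    have h1 := LieHom.map_lie (ι 𝕜) e f
    rw [hef, Ring.lie_def] at h1
    exact h1.symm
  have memI : ∀ u : R, u * E ∈ Ideal.span {E} :=
    fun u => Ideal.mul_mem_left _ u (Ideal.subset_span (Set.mem_singleton E))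
  induction k with
  | zero =>
    simp only [Function.iterate_zero, id_eq, Nat.descFactorial_zero, Nat.cast_one,
      descPochhammer_zero, map_one, one_mul, mul_one, Nat.sub_zero, sub_self]
    exact Ideal.zero_mem _
  | succ k ih =>
    have hkm' : k ≤ m := Nat.le_of_succ_le hkm
    have IH := ih hkm'
    set A : R := H - (m : R) + (k : R) with hAdef
    set Q : R := aeval A (descPochhammer 𝕜 k) with hQdef
    set c : R := (m.descFactorial k : R) with hcdef
    obtain ⟨u, hu⟩ := Submodule.mem_span_singleton.mp IH
    rw [smul_eq_mul] at hu
    have hXk : (fun y => E * y - y * E)^[k] (F ^ m) = c * F^(m-k) * Q + u * E := by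
      rw [eq_add_of_sub_eq hu.symm]; abel
    -- commutation of E with A
    have hEA : E * A = (A - 2) * E := by
      have h1 : (m:R) * E = E * (m:R) := (Nat.cast_commute m E).eq
      have h2 : (k:R) * E = E * (k:R) := (Nat.cast_commute k E).eq
      rw [hAdef]
      linear_combination (norm := (simp only [R]; noncomm_ring)) -hHE + h1 - h2
    -- ad of Q lands in the ideal
    have hQ : E * Q - Q * E = (aeval (A - 2) (descPochhammer 𝕜 k) - Q) * E := by
      rw [hQdef, aux_poly E A hEA, sub_mul]
    -- ad of F^(m-k)
    have hF1 : E * F^(m-k) - F^(m-k) * E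
        = ((m-k : ℕ) : R) * F^(m-(k+1)) * (H - ((m - (k+1) : ℕ) : R)) := by
      have h0 := aux_Fpow E F H hEF hHF (m - (k+1))
      rwa [show m - (k+1) + 1 = m - k from by omega] at h0
    have hcast2 : ((m - (k+1) : ℕ) : R) = (m:R) - (k:R) - 1 := by
      push_cast [hkm]; abel
    have hA' : H - ((m - (k+1) : ℕ) : R) = A + 1 := by
      rw [hcast2, hAdef]; abel
    -- descPochhammer recursion
    have hpoch : aeval (A + 1) (descPochhammer 𝕜 (k+1)) = (A + 1) * Q := by
      rw [descPochhammer_succ_left, map_mul, aeval_X, aeval_comp, map_sub, aeval_X, aeval_one,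
        add_sub_cancel_right, hQdef]
    -- descFactorial recursion
    have hfac : (m.descFactorial (k+1) : R) = ((m - k : ℕ) : R) * c := by
      rw [hcdef, Nat.descFactorial_succ, Nat.cast_mul]
    -- now the main computation
    rw [Function.iterate_succ_apply', hXk]
    have hargs : H - (m:R) + ((k+1 : ℕ) : R) = A + 1 := by
      rw [hAdef]; push_cast; abel
    have key : E * (c * F^(m-k) * Q + u * E) - (c * F^(m-k) * Q + u * E) * E
        - (m.descFactorial (k+1) : R) * F^(m-(k+1))
          * aeval (H - (m : R) + ((k+1 : ℕ) : R)) (descPochhammer 𝕜 (k+1))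
        = (c * (F^(m-k) * (aeval (A - 2) (descPochhammer 𝕜 k) - Q)) + (E * u - u * E)) * E := by
      have hcE : E * c = c * E := (Nat.cast_commute (m.descFactorial k) E).eq.symm
      have hdc : ((m-k : ℕ) : R) * c = c * ((m-k : ℕ) : R) :=
        (Nat.cast_commute (m-k) c).eq
      have haev : aeval (H - (m : R) + ((k+1 : ℕ) : R)) (descPochhammer 𝕜 (k+1))
          = (A + 1) * Q := by rw [hargs, hpoch]
      rw [haev, hfac, ← hA']
      linear_combination (norm := (simp only [R]; noncomm_ring)) hcE * (F^(m-k) * Q)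
        + c * (hF1 * Q) + c * (F^(m-k) * hQ)
        - hdc * (F^(m-(k+1)) * ((H - ((m - (k+1) : ℕ) : R)) * Q))
    rw [key]
    exact memI _
end

section
/- Let $l \ge 2$, $n \ge 1$ be integers and set $\bar\rho = \sum_{i=1}^l (l-i+\tfrac12)\epsilon_i \in \mathbb{R}^l$. For every root $\alpha$ of type $B_l$ and every integer $m \ge 1$ the quantity $N(\alpha,m) = \frac{2}{(\alpha,\alpha)}\left( m(n + l - \tfrac{1}{2}) + (\bar\rho,\alpha)\right)$ is not a nonpositive integer; moreover if $(\alpha,\alpha)=2$ and $m$ is even then $N(\alpha,m) \ge 2n$, if $(\alpha,\alpha)=2$ and $m$ is odd then $N(\alpha,m) \notin \mathbb{Z}$, and if $(\alpha,\alpha)=1$ then $N(\alpha,m) \ge 2n-1$. -/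
/-! A short root `±εᵢ` has `(α,α) = 1` and `(ρ̄,α) = ±(l - i - 1/2) ≥ 1/2 - l`, so
`N(α,m) = 2m(n + l - 1/2) + 2(ρ̄,α) ≥ 2n`. A long root `±εᵢ ± εⱼ` has `(α,α) = 2` and
`(ρ̄,α)` an integer `≥ 2 - 2l`, since the coordinates of `ρ̄` differ by integers and the two
largest add up to `2l - 2`. Hence `N(α,m) = m(n + l - 1/2) + (ρ̄,α)` is at least `2n + 1`
when `m ≥ 2` is even, and lies in `1/2 + ℤ` when `m` is odd. -/

noncomputable section

/-- Standard dot product on `ℝ^l`. -/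
def dotR {l : ℕ} (u v : Fin l → ℝ) : ℝ := ∑ t, u t * v t

/-- The standard basis vector `ε_i` of `ℝ^l`. -/
def epsR {l : ℕ} (i : Fin l) : Fin l → ℝ := fun t => if t = i then 1 else 0

/-- Membership in the root system of type `B_l`. -/
def IsRootB {l : ℕ} (v : Fin l → ℝ) : Prop :=
  (∃ i, v = epsR i ∨ v = -epsR i) ∨
  ∃ i j, i ≠ j ∧ (v = epsR i + epsR j ∨ v = epsR i - epsR j ∨
    v = -epsR i + epsR j ∨ v = -epsR i - epsR j)

/-- `ρ̄ = ∑ᵢ (l - i + 1/2) εᵢ` (0-indexed). -/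
def rhoBarB (l : ℕ) : Fin l → ℝ := fun t => (l : ℝ) - (t : ℕ) - 1 / 2

/-- The quantity `N(α,m) = (2/(α,α)) (m(n + l - 1/2) + (ρ̄,α))`. -/
def NB (l n : ℕ) (α : Fin l → ℝ) (m : ℕ) : ℝ :=
  2 / dotR α α * ((m : ℝ) * ((n : ℝ) + (l : ℝ) - 1 / 2) + dotR (rhoBarB l) α)

end

open Matrix

section RootsB

variable {l : ℕ}

theorem dotR_eq_dotProduct (u v : Fin l → ℝ) : dotR u v = u ⬝ᵥ v := rfl

theorem epsR_eq_single (i : Fin l) : epsR i = Pi.single i 1 := by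
  ext t
  simp [epsR, Pi.single_apply]

theorem IsRootB.short_or_long {α : Fin l → ℝ} (hα : IsRootB α) :
    (dotR α α = 1 ∧ 1 / 2 - l ≤ dotR (rhoBarB l) α) ∨
    (dotR α α = 2 ∧ ∃ c : ℤ, 2 - 2 * (l : ℤ) ≤ c ∧ dotR (rhoBarB l) α = c) := by
  rcases hα with ⟨i, hα⟩ | ⟨i, j, hij, hα⟩
  · left
    have hi : (i : ℝ) + 1 ≤ l := by exact_mod_cast i.isLt
    rcases hα with rfl | rfl <;>
      simp [dotR_eq_dotProduct, epsR_eq_single, rhoBarB] <;> linarith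
  · right
    have hij' : (i : ℕ) ≠ j := Fin.val_ne_of_ne hij
    have := j.isLt
    rcases hα with rfl | rfl | rfl | rfl
    all_goals simp only [dotR_eq_dotProduct, epsR_eq_single, dotProduct_add, dotProduct_sub,
      dotProduct_neg, dotProduct_single, Pi.add_apply, Pi.sub_apply, Pi.neg_apply,
      Pi.single_eq_same, Pi.single_eq_of_ne hij, Pi.single_eq_of_ne hij.symm]
    all_goals refine ⟨by norm_num, ?_⟩
    · refine ⟨2 * l - i - j - 1, by omega, ?_⟩
      simp only [rhoBarB]; push_cast; ring
    · refine ⟨j - i, by omega, ?_⟩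
      simp only [rhoBarB]; push_cast; ring
    · refine ⟨i - j, by omega, ?_⟩
      simp only [rhoBarB]; push_cast; ring
    · refine ⟨-(2 * l - i - j - 1), by omega, ?_⟩
      simp only [rhoBarB]; push_cast; ring

end RootsB

theorem NB_of_dotR_self_eq_one {l n : ℕ} {α : Fin l → ℝ} (hα : dotR α α = 1) (m : ℕ) :
    NB l n α m = 2 * (m * (n + l - 1 / 2) + dotR (rhoBarB l) α) := by
  rw [NB, hα, div_one]

theorem NB_of_dotR_self_eq_two {l n : ℕ} {α : Fin l → ℝ} (hα : dotR α α = 2) (m : ℕ) :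
    NB l n α m = m * (n + l - 1 / 2) + dotR (rhoBarB l) α := by
  rw [NB, hα, div_self two_ne_zero, one_mul]

theorem not_exists_nonpos_intCast_eq_of_pos {x : ℝ} (hx : 0 < x) :
    ¬ ∃ z : ℤ, z ≤ 0 ∧ x = z := by
  rintro ⟨z, hz, rfl⟩
  exact (Int.cast_nonpos.2 hz).not_gt hx

theorem not_exists_intCast_eq_of_two_mul_eq_odd {x : ℝ} {k : ℤ} (hk : Odd k) (hx : 2 * x = k) :
    ¬ ∃ z : ℤ, x = z := by
  rintro ⟨z, rfl⟩
  have hz : 2 * z = k := by exact_mod_cast hx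
  exact Int.not_even_iff_odd.2 hk (hz ▸ even_two_mul z)

section Estimates

variable {l n m : ℕ} {α : Fin l → ℝ}

theorem add_sub_half_nonneg (hn : 1 ≤ n) (l : ℕ) : (0 : ℝ) ≤ n + l - 1 / 2 := by
  have : (1 : ℝ) ≤ n := by exact_mod_cast hn
  linarith [(Nat.cast_nonneg l : (0 : ℝ) ≤ l)]

theorem two_mul_le_NB_of_short (hn : 1 ≤ n) (hm : 1 ≤ m) (hα : dotR α α = 1)
    (hρ : 1 / 2 - l ≤ dotR (rhoBarB l) α) : (2 * n : ℝ) ≤ NB l n α m := by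
  have hm' : (1 : ℝ) ≤ m := by exact_mod_cast hm
  have hK : (n : ℝ) + l - 1 / 2 ≤ m * (n + l - 1 / 2) :=
    le_mul_of_one_le_left (add_sub_half_nonneg hn l) hm'
  rw [NB_of_dotR_self_eq_one hα]
  linarith

theorem two_mul_add_one_le_NB_of_long_of_even (hn : 1 ≤ n) (hm : 1 ≤ m) (he : Even m)
    (hα : dotR α α = 2) {c : ℤ} (hc : 2 - 2 * (l : ℤ) ≤ c) (hρ : dotR (rhoBarB l) α = c) :
    (2 * n : ℝ) + 1 ≤ NB l n α m := by
  have hm2 : (2 : ℝ) ≤ m := by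
    obtain ⟨k, rfl⟩ := he
    exact_mod_cast (by omega : 2 ≤ k + k)
  have hc' : (2 : ℝ) - 2 * l ≤ c := by exact_mod_cast hc
  have hK : 2 * ((n : ℝ) + l - 1 / 2) ≤ m * (n + l - 1 / 2) :=
    mul_le_mul_of_nonneg_right hm2 (add_sub_half_nonneg hn l)
  rw [NB_of_dotR_self_eq_two hα, hρ]
  linarith

theorem not_exists_intCast_eq_NB_of_long_of_odd (ho : Odd m) (hα : dotR α α = 2) {c : ℤ}
    (hρ : dotR (rhoBarB l) α = c) : ¬ ∃ z : ℤ, NB l n α m = z := by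
  obtain ⟨k, rfl⟩ := ho
  refine not_exists_intCast_eq_of_two_mul_eq_odd (k := (2 * k + 1) * (2 * (n + l) - 1) + 2 * c)
    ?_ ?_
  · exact ⟨2 * k * (n + l) - k + (n + l) - 1 + c, by ring⟩
  · rw [NB_of_dotR_self_eq_two hα, hρ]
    push_cast
    ring

end Estimates

theorem stmt_10_general (l n : ℕ) (hn : 1 ≤ n) (α : Fin l → ℝ) (hα : IsRootB α)
    (m : ℕ) (hm : 1 ≤ m) :
    (¬ ∃ z : ℤ, z ≤ 0 ∧ NB l n α m = (z : ℝ)) ∧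
    (dotR α α = 2 → Even m → (2 * n : ℝ) ≤ NB l n α m) ∧
    (dotR α α = 2 → Odd m → ¬ ∃ z : ℤ, NB l n α m = (z : ℝ)) ∧
    (dotR α α = 1 → (2 * n : ℝ) - 1 ≤ NB l n α m) := by
  rcases hα.short_or_long with ⟨hαα, hρ⟩ | ⟨hαα, c, hc, hρ⟩
  · have hn' : (1 : ℝ) ≤ n := by exact_mod_cast hn
    have hN := two_mul_le_NB_of_short hn hm hαα hρ (n := n)
    refine ⟨not_exists_nonpos_intCast_eq_of_pos (by linarith), ?_, ?_, fun _ => by linarith⟩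
    all_goals intro h; norm_num [hαα] at h
  · have hN_even (he : Even m) :=
      two_mul_add_one_le_NB_of_long_of_even hn hm he hαα hc hρ
    have hN_odd (ho : Odd m) := not_exists_intCast_eq_NB_of_long_of_odd (n := n) ho hαα hρ
    refine ⟨?_, fun _ he => by linarith [hN_even he], fun _ => hN_odd, ?_⟩
    · rcases Nat.even_or_odd m with he | ho
      · exact not_exists_nonpos_intCast_eq_of_pos
          (by linarith [hN_even he, (Nat.cast_nonneg n : (0 : ℝ) ≤ n)])
      · exact fun ⟨z, _, hz⟩ => hN_odd ho ⟨z, hz⟩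
    · intro h; norm_num [hαα] at h

/-- For every root `α` of `B_l` and every `m ≥ 1`, `N(α,m)` is not a nonpositive integer;
moreover if `(α,α)=2` and `m` even then `N(α,m) ≥ 2n`, if `(α,α)=2` and `m` odd then
`N(α,m) ∉ ℤ`, and if `(α,α)=1` then `N(α,m) ≥ 2n-1`. -/
theorem stmt_10 (l n : ℕ) (hl : 2 ≤ l) (hn : 1 ≤ n) (α : Fin l → ℝ) (hα : IsRootB α)
    (m : ℕ) (hm : 1 ≤ m) :
    (¬ ∃ z : ℤ, z ≤ 0 ∧ NB l n α m = (z : ℝ)) ∧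
    (dotR α α = 2 → Even m → (2 * n : ℝ) ≤ NB l n α m) ∧
    (dotR α α = 2 → Odd m → ¬ ∃ z : ℤ, NB l n α m = (z : ℝ)) ∧
    (dotR α α = 1 → (2 * n : ℝ) - 1 ≤ NB l n α m) :=
  stmt_10_general l n hn α hα m hm
end

section
/- Let $n \ge 1$ and $l \ge 2$ be integers, and let $x_1 \ge 2n$ and $y_2 \le y_3 \le \cdots \le y_l$ be nonnegative integers. Then the sum $\sum \frac{1}{k_1!\, 4^{k_1}} \prod_{j=2k_2+\cdots+2k_l}^{2n-1}(x_1 - j) \prod_{i=2}^{l} \prod_{j=0}^{k_i-1}\left(y_i - k_2 - \cdots - k_{i-1} - j\right)$, taken over all $(k_1,\dots,k_l) \in \mathbb{Z}_{\ge 0}^l$ with $k_1 + \cdots + k_l = n$, is strictly positive. (Here each factor of each falling-factorial product, when the product is nonzero, is a nonnegative integer, and the summand with $k_1 = n$, $k_2 = \cdots = k_l = 0$ equals $\frac{1}{n!4^n} x_1(x_1-1)\cdots(x_1-2n+1) > 0$.) -/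
/-- Positivity of the sum
`∑_{k₁+⋯+k_l=n} (1/(k₁! 4^{k₁})) ∏_{j=2k₂+⋯+2k_l}^{2n-1}(x₁-j)
  ∏_{i=2}^{l} ∏_{j=0}^{k_i-1}(y_i - k₂ - ⋯ - k_{i-1} - j)`
when `x₁ ≥ 2n` and `y₂ ≤ ⋯ ≤ y_l` are nonnegative integers (0-indexed: the tuple
entry `k 0` is the paper's `k₁`, and `k t`, `y t` for `t ≥ 1` are the paper's
`k_{t+1}`, `y_{t+1}`). -/
theorem stmt_14 (l n : ℕ) (hl : 2 ≤ l) (hn : 1 ≤ n)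
    (x1 : ℕ) (hx : 2 * n ≤ x1) (y : Fin l → ℕ)
    (hy : ∀ a b : Fin l, 1 ≤ (a : ℕ) → a ≤ b → y a ≤ y b) :
    0 < ∑ k ∈ Finset.Nat.antidiagonalTuple l n,
        (1 / ((k ⟨0, by omega⟩).factorial * 4 ^ (k ⟨0, by omega⟩)) : ℚ) *
          (∏ j ∈ Finset.Ico (2 * ∑ s ∈ Finset.Ioi (⟨0, by omega⟩ : Fin l), k s) (2 * n),
            ((x1 : ℚ) - (j : ℚ))) *
          ∏ t ∈ Finset.Ioi (⟨0, by omega⟩ : Fin l),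
            ∏ j ∈ Finset.range (k t),
              ((y t : ℚ) - (∑ s ∈ Finset.Ioo (⟨0, by omega⟩ : Fin l) t, (k s : ℚ)) - (j : ℚ)) := by
  set z : Fin l := ⟨0, by omega⟩ with hz
  apply Finset.sum_pos'
  · -- every term is nonnegative
    intro k hk
    have hA : (0:ℚ) < 1 / ((k z).factorial * 4 ^ (k z)) := by
      apply div_pos one_pos
      positivity
    have hB : (0:ℚ) < ∏ j ∈ Finset.Ico (2 * ∑ s ∈ Finset.Ioi z, k s) (2 * n),
        ((x1 : ℚ) - (j : ℚ)) := by
      apply Finset.prod_pos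
      intro j hj
      rw [Finset.mem_Ico] at hj
      have : j < x1 := by omega
      have : (j:ℚ) < (x1:ℚ) := by exact_mod_cast this
      linarith
    have hC : (0:ℚ) ≤ ∏ t ∈ Finset.Ioi z, ∏ j ∈ Finset.range (k t),
        ((y t : ℚ) - (∑ s ∈ Finset.Ioo z t, (k s : ℚ)) - (j : ℚ)) := by
      by_cases hP : (∏ t ∈ Finset.Ioi z, ∏ j ∈ Finset.range (k t),
          ((y t : ℚ) - (∑ s ∈ Finset.Ioo z t, (k s : ℚ)) - (j : ℚ))) = 0
      · rw [hP]
      · -- no factor is zero; prove all factors are positive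
        have hnz : ∀ t ∈ Finset.Ioi z, ∀ j ∈ Finset.range (k t),
            ((y t : ℚ) - (∑ s ∈ Finset.Ioo z t, (k s : ℚ)) - (j : ℚ)) ≠ 0 := by
          intro t ht j hj
          exact Finset.prod_ne_zero_iff.mp (Finset.prod_ne_zero_iff.mp hP t ht) j hj
        -- key claim by strong induction on t
        have key : ∀ m : ℕ, ∀ t : Fin l, (t : ℕ) = m → z < t →
            (∑ s ∈ Finset.Ioc z t, k s) ≤ y t := by
          intro m
          induction m using Nat.strong_induction_on with
          | _ m ih =>
            intro t htm hzt
            have hts : Finset.Ioc z t = insert t (Finset.Ioo z t) :=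
              (Finset.Ioo_insert_right hzt).symm
            have htni : t ∉ Finset.Ioo z t := by simp
            rw [hts, Finset.sum_insert htni]
            set c := ∑ s ∈ Finset.Ioo z t, k s with hc
            by_contra hcon
            push_neg at hcon
            rcases le_or_gt c (y t) with hcy | hcy
            · -- factor at j = y t - c is zero
              have hjlt : y t - c < k t := by omega
              have := hnz t (by simpa using hzt) (y t - c) (by simpa using hjlt)
              apply this
              have hcast : (c:ℚ) = ∑ s ∈ Finset.Ioo z t, (k s : ℚ) := by
                rw [hc]; push_cast; ring
              rw [← hcast]
              have : (y t : ℚ) = (c:ℚ) + ((y t - c : ℕ) : ℚ) := by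
                have : y t = c + (y t - c) := by omega
                exact_mod_cast congrArg (Nat.cast : ℕ → ℚ) this
              rw [this]; ring
            · -- y t < c : find the largest earlier index with nonzero k, contradict IH
              have hcne : c ≠ 0 := by omega
              set S := (Finset.Ioo z t).filter (fun s => k s ≠ 0) with hS
              have hSne : S.Nonempty := by
                by_contra hSe
                rw [Finset.not_nonempty_iff_eq_empty] at hSe
                apply hcne
                apply Finset.sum_eq_zero
                intro s hs
                by_contra hks
                have : s ∈ S := by rw [hS]; exact Finset.mem_filter.mpr ⟨hs, hks⟩
                rw [hSe] at this; simp at this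
              set u := S.max' hSne with hu
              have huS : u ∈ S := Finset.max'_mem _ _
              rw [hS, Finset.mem_filter, Finset.mem_Ioo] at huS
              obtain ⟨⟨hzu, hut⟩, hku⟩ := huS
              have hsplit : Finset.Ioo z t = Finset.Ioc z u ∪ Finset.Ioo u t := by
                ext v
                simp only [Finset.mem_Ioo, Finset.mem_Ioc, Finset.mem_union,
                  Fin.lt_def, Fin.le_def]
                have h1 : (z:ℕ) < (u:ℕ) := hzu
                have h2 : (u:ℕ) < (t:ℕ) := hut
                omega
              have hdisj : Disjoint (Finset.Ioc z u) (Finset.Ioo u t) := by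
                rw [Finset.disjoint_left]
                intro v hv1 hv2
                rw [Finset.mem_Ioc] at hv1
                rw [Finset.mem_Ioo] at hv2
                exact absurd hv1.2 (not_le.mpr hv2.1)
              have hzero : ∑ s ∈ Finset.Ioo u t, k s = 0 := by
                apply Finset.sum_eq_zero
                intro v hv
                rw [Finset.mem_Ioo] at hv
                by_contra hkv
                have hvS : v ∈ S := by
                  rw [hS, Finset.mem_filter, Finset.mem_Ioo]
                  exact ⟨⟨lt_trans hzu hv.1, hv.2⟩, hkv⟩
                have := Finset.le_max' S v hvS
                rw [← hu] at this
                exact absurd hv.1 (not_lt.mpr this)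
              have hceq : c = ∑ s ∈ Finset.Ioc z u, k s := by
                rw [hc, hsplit, Finset.sum_union hdisj, hzero, add_zero]
              have hIH : (∑ s ∈ Finset.Ioc z u, k s) ≤ y u := by
                apply ih (u : ℕ) _ u rfl hzu
                rw [← htm]; exact hut
              have hyu : y u ≤ y t := by
                apply hy u t _ (le_of_lt hut)
                have : (z:ℕ) < (u:ℕ) := hzu
                have h0 : (0:ℕ) < (u:ℕ) := by simpa [hz] using this
                omega
              omega
        -- now all factors are positive
        apply le_of_lt
        apply Finset.prod_pos
        intro t ht
        apply Finset.prod_pos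
        intro j hj
        rw [Finset.mem_range] at hj
        have hzt : z < t := by simpa using ht
        have hkey := key (t : ℕ) t rfl hzt
        have hts : Finset.Ioc z t = insert t (Finset.Ioo z t) :=
          (Finset.Ioo_insert_right hzt).symm
        rw [hts, Finset.sum_insert (by simp)] at hkey
        have hcast : ((∑ s ∈ Finset.Ioo z t, k s : ℕ) : ℚ)
            = ∑ s ∈ Finset.Ioo z t, (k s : ℚ) := by push_cast; ring
        rw [← hcast]
        have h1 : (j : ℚ) + ((∑ s ∈ Finset.Ioo z t, k s : ℕ) : ℚ) < (y t : ℚ) := by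
          have : j + (∑ s ∈ Finset.Ioo z t, k s) < y t := by omega
          exact_mod_cast this
        linarith
    positivity
  · -- the witness term with k = (n, 0, …, 0) is positive
    refine ⟨fun i => if i = z then n else 0, ?_, ?_⟩
    · rw [Finset.Nat.mem_antidiagonalTuple]
      simp
    · simp only [if_pos rfl]
      have h1 : ∑ s ∈ Finset.Ioi z, (if s = z then n else 0) = 0 := by
        apply Finset.sum_eq_zero
        intro s hs
        rw [Finset.mem_Ioi] at hs
        rw [if_neg (ne_of_gt hs)]
      rw [h1]
      have h2 : ∀ t ∈ Finset.Ioi z,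
          (∏ j ∈ Finset.range (if t = z then n else 0),
            ((y t : ℚ) - (∑ s ∈ Finset.Ioo z t, ((if s = z then n else 0 : ℕ) : ℚ)) - (j : ℚ))) = 1 := by
        intro t ht
        rw [Finset.mem_Ioi] at ht
        rw [if_neg (ne_of_gt ht)]
        simp
      rw [Finset.prod_congr rfl h2, Finset.prod_const_one, mul_one, mul_zero]
      apply mul_pos
      · apply div_pos one_pos
        positivity
      · apply Finset.prod_pos
        intro j hj
        rw [Finset.mem_Ico] at hj
        have : j < x1 := by omega
        have : (j:ℚ) < (x1:ℚ) := by exact_mod_cast this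
        linarith
end

section
/- Let $l \ge 2$ and let $S \subseteq \{1,\dots,l-1\}$ with elements $i_1 < \cdots < i_k$. Define $h_{i_j} = i_j + 2\sum_{s=j+1}^k (-1)^{s-j} i_s + (-1)^{k-j+1}(l-\tfrac12)$. Then: (a) $h_{i_k} < 0$; (b) for every $1 \le s \le t \le k$ with $t - s$ odd, $h_{i_s} + h_{i_{s+1}} + \cdots + h_{i_t} = -\sum_{j=s,\, j \equiv s \ (2)}^{t-1} (i_{j+1} - i_j) \ge -(i_t - i_s)$; in particular every such partial sum over an even number of consecutive terms is a nonpositive integer bounded below by $-(i_t - i_s)$. -/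
/-!
Neighbouring coordinates have alternating tails that cancel up to one term, so
`h_j + h_{j+1} = i_j - i_{j+1}`. Hence a sum of an even number of consecutive coordinates is minus
every other gap `i_{j+1} - i_j`: the gaps are positive integers whose total is `i_t - i_s`. The last
coordinate is `i_k - (l - 1/2)`, negative because `i_k ≤ l - 1`.
-/

open Finset

theorem Finset.sum_Icc_eq_sum_Ico_ite_pairs {M : Type*} [AddCommMonoid M] (f : ℕ → M)
    (s n : ℕ) :
    ∑ j ∈ Icc s (s + 2 * n + 1), f j
      = ∑ j ∈ Ico s (s + 2 * n + 1), if (j - s) % 2 = 0 then f j + f (j + 1) else 0 := by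
  induction n with
  | zero => simp [sum_Icc_succ_top]
  | succ n ih =>
    have hlen : s + 2 * (n + 1) + 1 = s + 2 * n + 1 + 1 + 1 := by ring
    rw [hlen, sum_Icc_succ_top (by omega), sum_Icc_succ_top (by omega), ih]
    conv_rhs => rw [sum_Ico_succ_top (by omega), sum_Ico_succ_top (by omega),
      if_neg (by omega), if_pos (by omega), add_zero]
    exact add_assoc _ _ _

theorem Finset.sum_Icc_eq_sum_filter_add_succ {M : Type*} [AddCommMonoid M] (f : ℕ → M)
    {s t : ℕ} (hst : s ≤ t) (hodd : Odd (t - s)) :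
    ∑ j ∈ Icc s t, f j = ∑ j ∈ (Ico s t).filter (fun j => (j - s) % 2 = 0), (f j + f (j + 1)) := by
  obtain ⟨n, hn⟩ := hodd
  obtain rfl : t = s + 2 * n + 1 := by omega
  rw [sum_filter, sum_Icc_eq_sum_Ico_ite_pairs]

theorem Finset.sum_filter_sub_le_sub {M : Type*} [AddCommGroup M] [PartialOrder M]
    [IsOrderedAddMonoid M] (x : ℕ → M) (p : ℕ → Prop) [DecidablePred p] {s t : ℕ} (hst : s ≤ t)
    (hx : ∀ j ∈ Ico s t, x j ≤ x (j + 1)) :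
    ∑ j ∈ (Ico s t).filter p, (x (j + 1) - x j) ≤ x t - x s := by
  rw [← sum_Ico_sub x hst]
  exact sum_le_sum_of_subset_of_nonneg (filter_subset _ _)
    fun j hj _ => sub_nonneg.2 (hx j hj)

/-- `weightCoord l k i j` is the paper's `h_{i_{j+1}}`, with `S` listed as `i 0 < ⋯ < i (k - 1)`. -/
def weightCoord (l k : ℕ) (i : ℕ → ℕ) (j : ℕ) : ℚ :=
  (i j : ℚ) + 2 * ∑ s ∈ Finset.Ico (j + 1) k, (-1 : ℚ) ^ (s - j) * (i s : ℚ)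
    + (-1 : ℚ) ^ (k - j) * ((l : ℚ) - 1 / 2)

section weightCoord

variable {l k : ℕ} {i : ℕ → ℕ}

theorem weightCoord_pred (hk : 1 ≤ k) :
    weightCoord l k i (k - 1) = i (k - 1) - ((l : ℚ) - 1 / 2) := by
  have hk' : k - 1 + 1 = k := by omega
  rw [weightCoord, hk', Ico_self, sum_empty, Nat.sub_sub_self hk, pow_one]
  ring

theorem weightCoord_add_weightCoord_succ {j : ℕ} (hj : j + 1 < k) :
    weightCoord l k i j + weightCoord l k i (j + 1) = (i j : ℚ) - i (j + 1) := by
  have htail : ∑ s ∈ Ico (j + 1) k, (-1 : ℚ) ^ (s - j) * i s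
      = -i (j + 1) - ∑ s ∈ Ico (j + 1 + 1) k, (-1 : ℚ) ^ (s - (j + 1)) * i s := by
    rw [sum_eq_sum_Ico_succ_bot hj, Nat.add_sub_cancel_left, pow_one, sub_eq_add_neg,
      ← sum_neg_distrib]
    congr 1
    · ring
    · refine sum_congr rfl fun s hs => ?_
      rw [show s - j = s - (j + 1) + 1 by simp only [mem_Ico] at hs; omega, pow_succ]
      ring
  have hsign : (-1 : ℚ) ^ (k - j) = -(-1) ^ (k - (j + 1)) := by
    rw [show k - j = k - (j + 1) + 1 by omega, pow_succ]
    ring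
  rw [weightCoord, weightCoord, htail, hsign]
  ring

end weightCoord

theorem stmt_19_general (l k : ℕ) (i : ℕ → ℕ)
    (hmono : ∀ a b, a < b → b < k → i a < i b)
    (hrange : ∀ j < k, 1 ≤ i j ∧ i j ≤ l - 1) :
    let h : ℕ → ℚ := fun j => (i j : ℚ)
      + 2 * ∑ s ∈ Finset.Ico (j + 1) k, (-1 : ℚ) ^ (s - j) * (i s : ℚ)
      + (-1 : ℚ) ^ (k - j) * ((l : ℚ) - 1 / 2)
    (1 ≤ k → h (k - 1) < 0) ∧
    ∀ s t, s ≤ t → t < k → Odd (t - s) →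
      (∑ j ∈ Finset.Icc s t, h j
          = -∑ j ∈ (Finset.Ico s t).filter (fun j => (j - s) % 2 = 0),
              ((i (j + 1) : ℚ) - (i j : ℚ))) ∧
      -((i t : ℚ) - (i s : ℚ)) ≤ ∑ j ∈ Finset.Icc s t, h j ∧
      ∑ j ∈ Finset.Icc s t, h j ≤ 0 ∧
      ∃ z : ℤ, ∑ j ∈ Finset.Icc s t, h j = (z : ℚ) := by
  intro h
  have hh : h = weightCoord l k i := rfl
  simp only [hh]
  refine ⟨fun hk => ?_, fun s t hst htk hodd => ?_⟩
  · obtain ⟨hpos, hle⟩ := hrange (k - 1) (by omega)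
    have : (i (k - 1) : ℚ) + 1 ≤ l := by exact_mod_cast (by omega : i (k - 1) + 1 ≤ l)
    rw [weightCoord_pred hk]
    linarith
  · have hpairs : ∑ j ∈ Icc s t, weightCoord l k i j
        = -∑ j ∈ (Ico s t).filter (fun j => (j - s) % 2 = 0), ((i (j + 1) : ℚ) - i j) := by
      rw [sum_Icc_eq_sum_filter_add_succ _ hst hodd, ← sum_neg_distrib]
      refine sum_congr rfl fun j hj => ?_
      rw [weightCoord_add_weightCoord_succ (by simp only [mem_filter, mem_Ico] at hj; omega), neg_sub]
    have hinc : ∀ j ∈ Ico s t, (i j : ℚ) < i (j + 1) := fun j hj => by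
      simp only [mem_Ico] at hj
      exact_mod_cast hmono j (j + 1) (by omega) (by omega)
    refine ⟨hpairs, ?_, ?_, ?_⟩
    · rw [hpairs, neg_le_neg_iff]
      exact sum_filter_sub_le_sub _ _ hst fun j hj => (hinc j hj).le
    · rw [hpairs, neg_nonpos]
      exact sum_nonneg fun j hj => sub_nonneg.2 (hinc j (mem_filter.1 hj).1).le
    · exact ⟨-∑ j ∈ (Ico s t).filter (fun j => (j - s) % 2 = 0), ((i (j + 1) : ℤ) - i j),
        by rw [hpairs]; push_cast; rfl⟩

/-- Properties of the coordinates `h_{i_j}` of the admissible weight `μ_S` (0-indexed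
`j = 0, …, k-1`): (a) `h_{i_k} < 0`; (b) for `s ≤ t` with `t - s` odd, the partial sum
`h_{i_s} + ⋯ + h_{i_t}` equals `-∑_{j ≡ s (2), s ≤ j < t} (i_{j+1} - i_j)`, is at least
`-(i_t - i_s)`, is nonpositive, and is an integer. -/
theorem stmt_19 (l k : ℕ) (hl : 2 ≤ l) (i : ℕ → ℕ)
    (hmono : ∀ a b, a < b → b < k → i a < i b)
    (hrange : ∀ j < k, 1 ≤ i j ∧ i j ≤ l - 1) :
    let h : ℕ → ℚ := fun j => (i j : ℚ)
      + 2 * ∑ s ∈ Finset.Ico (j + 1) k, (-1 : ℚ) ^ (s - j) * (i s : ℚ)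
      + (-1 : ℚ) ^ (k - j) * ((l : ℚ) - 1 / 2)
    (1 ≤ k → h (k - 1) < 0) ∧
    ∀ s t, s ≤ t → t < k → Odd (t - s) →
      (∑ j ∈ Finset.Icc s t, h j
          = -∑ j ∈ (Finset.Ico s t).filter (fun j => (j - s) % 2 = 0),
              ((i (j + 1) : ℚ) - (i j : ℚ))) ∧
      -((i t : ℚ) - (i s : ℚ)) ≤ ∑ j ∈ Finset.Icc s t, h j ∧
      ∑ j ∈ Finset.Icc s t, h j ≤ 0 ∧
      ∃ z : ℤ, ∑ j ∈ Finset.Icc s t, h j = (z : ℚ) :=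
  stmt_19_general l k i hmono hrange
end
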